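/- For the matrix X_s (s ≥ 2) and ψ = X_s^{-1} e₂ ∈ ℝ^s: if s is even then the first two components are ψ₀ = ξ₁^{-1} and ψ₁ = ξ₀ ξ₁^{-2}, while if s is odd (s ≥ 3) then ψ₀ = 0 and ψ₁ = 0. -/
import Mathlib

open Matrix

noncomputable def xi (i : ℕ) : ℝ := 1 / (2 * Real.sqrt |4 * (i:ℝ)^2 - 1|)

noncomputable def Xmat (s : ℕ) : Matrix (Fin s) (Fin s) ℝ :=
  Matrix.of fun i j =>
    if i.val = 0 ∧ j.val = 0 then xi 0
    else if i.val = j.val + 1 then xi i.val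
    else if j.val = i.val + 1 then -xi j.val
    else 0

lemma xi_pos (i : ℕ) : 0 < xi i := by
  unfold xi
  have h : (4 * (i:ℝ)^2 - 1) ≠ 0 := by
    have h2 : ((4*i^2 : ℕ):ℝ) ≠ 1 := by
      rw [Ne, Nat.cast_eq_one]; omega
    push_cast at h2
    intro h0; apply h2; linarith
  have habs : 0 < |4*(i:ℝ)^2 - 1| := abs_pos.mpr h
  have := Real.sqrt_pos.mpr habs
  positivity

lemma sum_two {n : ℕ} (f : Fin n → ℝ) (a b : Fin n) (x y : ℝ)
    (h : ∀ j, f j = (if j = a then x else 0) + (if j = b then y else 0)) :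
    ∑ j, f j = x + y := by
  simp only [h, Finset.sum_add_distrib, Finset.sum_ite_eq', Finset.mem_univ, if_true]

lemma sum_one {n : ℕ} (f : Fin n → ℝ) (a : Fin n) (x : ℝ)
    (h : ∀ j, f j = if j = a then x else 0) :
    ∑ j, f j = x := by
  simp only [h, Finset.sum_ite_eq', Finset.mem_univ, if_true]

/-- for `s ≥ 2` and `ψ = X_s⁻¹ e₂`: if `s` is even then
`ψ₀ = ξ₁⁻¹` and `ψ₁ = ξ₀ ξ₁⁻²`; if `s` is odd (hence `s ≥ 3`) then
`ψ₀ = 0` and `ψ₁ = 0`. -/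
theorem Xinv_e2_leading_entries (s : ℕ) (hs : 2 ≤ s)
    (hdet : IsUnit (Xmat s).det) :
    let ψ := (Xmat s)⁻¹.mulVec (Pi.single (⟨1, by omega⟩ : Fin s) (1:ℝ))
    (Even s → ψ ⟨0, by omega⟩ = (xi 1)⁻¹ ∧ ψ ⟨1, by omega⟩ = xi 0 * ((xi 1)⁻¹)^2) ∧
    (Odd s → ψ ⟨0, by omega⟩ = 0 ∧ ψ ⟨1, by omega⟩ = 0) := by
  intro ψ
  have hψ : ψ = (Xmat s)⁻¹.mulVec (Pi.single (⟨1, by omega⟩ : Fin s) (1:ℝ)) := rfl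
  have hmul : (Xmat s).mulVec ψ = Pi.single (⟨1, by omega⟩ : Fin s) (1:ℝ) := by
    rw [hψ, Matrix.mulVec_mulVec, Matrix.mul_nonsing_inv _ hdet, Matrix.one_mulVec]
  have row : ∀ i : Fin s, ∑ j, Xmat s i j * ψ j = if i.val = 1 then 1 else 0 := by
    intro i
    have h := congrFun hmul i
    rw [Matrix.mulVec, dotProduct] at h
    rw [h, Pi.single_apply]
    by_cases h1 : i.val = 1
    · rw [if_pos (Fin.ext h1), if_pos h1]
    · rw [if_neg (fun hc => h1 (by rw [hc])), if_neg h1]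
  have hz : ∀ (i j : Fin s), ¬(i.val = 0 ∧ j.val = 0) → i.val ≠ j.val + 1 →
      j.val ≠ i.val + 1 → Xmat s i j = 0 := by
    intro i j h1 h2 h3
    simp only [Xmat, of_apply, if_neg h1, if_neg h2, if_neg h3]
  have he1 : ∀ (i j : Fin s), i.val = j.val + 1 → ¬(i.val = 0 ∧ j.val = 0) →
      Xmat s i j = xi i.val := by
    intro i j h2 h1
    simp only [Xmat, of_apply, if_neg h1, if_pos h2]
  have he2 : ∀ (i j : Fin s), j.val = i.val + 1 → Xmat s i j = -xi j.val := by
    intro i j h3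
    have h1 : ¬(i.val = 0 ∧ j.val = 0) := by omega
    have h2 : i.val ≠ j.val + 1 := by omega
    simp only [Xmat, of_apply, if_neg h1, if_neg h2, if_pos h3]
  -- last row
  have rlast : xi (s-1) * ψ ⟨s-2, by omega⟩ = if s - 1 = 1 then 1 else 0 := by
    have hrow := row ⟨s-1, by omega⟩
    rw [sum_one _ (⟨s-2, by omega⟩ : Fin s) (xi (s-1) * ψ ⟨s-2, by omega⟩) ?_] at hrow
    · exact hrow
    · intro j
      by_cases hj : j = (⟨s-2, by omega⟩ : Fin s)
      · rw [hj, if_pos rfl,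
          he1 _ _ (show s-1 = (s-2) + 1 by omega) (show ¬(s-1 = 0 ∧ s-2 = 0) by omega)]
      · have hjv : j.val ≠ s - 2 := fun hc => hj (Fin.ext hc)
        have hjlt : j.val < s := j.isLt
        rw [if_neg hj, hz _ _ (show ¬(s-1 = 0 ∧ j.val = 0) by omega)
          (show s-1 ≠ j.val + 1 by omega) (show j.val ≠ (s-1) + 1 by omega), zero_mul]
  -- middle rows : row index k+1, 1 ≤ k+1 ≤ s-2
  have rmid : ∀ k, ∀ _hk : k + 3 ≤ s,
      xi (k+1) * ψ ⟨k, by omega⟩ - xi (k+2) * ψ ⟨k+2, by omega⟩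
        = if k = 0 then 1 else 0 := by
    intro k hk
    have hrow := row ⟨k+1, by omega⟩
    rw [sum_two _ (⟨k, by omega⟩ : Fin s) (⟨k+2, by omega⟩ : Fin s)
        (xi (k+1) * ψ ⟨k, by omega⟩) (-(xi (k+2) * ψ ⟨k+2, by omega⟩)) ?_] at hrow
    · rw [sub_eq_add_neg, hrow]
      by_cases hk0 : k = 0
      · rw [if_pos (show k+1 = 1 by omega), if_pos hk0]
      · rw [if_neg (show ¬(k+1 = 1) by omega), if_neg hk0]
    · intro j
      by_cases hja : j = (⟨k, by omega⟩ : Fin s)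
      · rw [hja, if_pos rfl, if_neg (Fin.ne_of_val_ne (show k ≠ k + 2 by omega)),
          he1 _ _ (show k+1 = k + 1 from rfl) (show ¬(k+1 = 0 ∧ k = 0) by omega)]
        ring
      · by_cases hjb : j = (⟨k+2, by omega⟩ : Fin s)
        · rw [hjb, if_neg (Fin.ne_of_val_ne (show k+2 ≠ k by omega)), if_pos rfl,
            he2 _ _ (show k+2 = (k+1) + 1 from rfl)]
          ring
        · have h1 : j.val ≠ k := fun hc => hja (Fin.ext hc)
          have h2 : j.val ≠ k + 2 := fun hc => hjb (Fin.ext hc)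
          rw [if_neg hja, if_neg hjb,
            hz _ _ (show ¬(k+1 = 0 ∧ j.val = 0) by omega)
              (show k+1 ≠ j.val + 1 by omega) (show j.val ≠ (k+1) + 1 by omega),
            zero_mul, add_zero]
  -- row 0
  have r0 : xi 0 * ψ ⟨0, by omega⟩ - xi 1 * ψ ⟨1, by omega⟩ = 0 := by
    have hrow := row ⟨0, by omega⟩
    rw [sum_two _ (⟨0, by omega⟩ : Fin s) (⟨1, by omega⟩ : Fin s)
        (xi 0 * ψ ⟨0, by omega⟩) (-(xi 1 * ψ ⟨1, by omega⟩)) ?_] at hrow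
    · rw [sub_eq_add_neg, hrow, if_neg (show ¬(0 = 1) by omega)]
    · intro j
      by_cases hja : j = (⟨0, by omega⟩ : Fin s)
      · rw [hja, if_pos rfl, if_neg (Fin.ne_of_val_ne (show 0 ≠ 1 by omega)),
          show Xmat s ⟨0, by omega⟩ ⟨0, by omega⟩ = xi 0 by simp [Xmat]]
        norm_num
      · by_cases hjb : j = (⟨1, by omega⟩ : Fin s)
        · rw [hjb, if_neg (Fin.ne_of_val_ne (show 1 ≠ 0 by omega)), if_pos rfl,
            he2 _ _ (show 1 = 0 + 1 from rfl)]
          ring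
        · have h1 : j.val ≠ 0 := fun hc => hja (Fin.ext hc)
          have h2 : j.val ≠ 1 := fun hc => hjb (Fin.ext hc)
          rw [if_neg hja, if_neg hjb,
            hz _ _ (show ¬(0 = 0 ∧ j.val = 0) by omega)
              (show 0 ≠ j.val + 1 by omega) (show j.val ≠ 0 + 1 by omega),
            zero_mul, add_zero]
  -- backward chain
  have key : ∀ m k (hk1 : 1 ≤ k) (hk2 : s - 2 = k + 2*m), ψ ⟨k, by omega⟩ = 0 := by
    intro m
    induction m with
    | zero =>
      intro k hk1 hk2
      have h := rlast
      rw [if_neg (show s - 1 ≠ 1 by omega)] at h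
      have h2 : ψ ⟨s-2, by omega⟩ = 0 := by
        rcases mul_eq_zero.mp h with h' | h'
        · exact absurd h' (xi_pos (s-1)).ne'
        · exact h'
      rw [show (⟨k, by omega⟩ : Fin s) = ⟨s-2, by omega⟩ from Fin.ext (show k = s-2 by omega)]
      exact h2
    | succ m ih =>
      intro k hk1 hk2
      have hih : ψ ⟨k+2, by omega⟩ = 0 := ih (k+2) (by omega) (by omega)
      have h := rmid k (by omega)
      rw [if_neg (show k ≠ 0 by omega),
        show (⟨k+2, by omega⟩ : Fin s) = ⟨k+2, by omega⟩ from Fin.ext rfl, hih,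
        mul_zero, sub_zero] at h
      rcases mul_eq_zero.mp h with h' | h'
      · exact absurd h' (xi_pos (k+1)).ne'
      · exact h'
  have hxi1 : xi 1 ≠ 0 := (xi_pos 1).ne'
  constructor
  · intro hev
    have hψ0 : ψ ⟨0, by omega⟩ = (xi 1)⁻¹ := by
      by_cases h2 : s = 2
      · have h := rlast
        rw [if_pos (show s - 1 = 1 by omega)] at h
        rw [show (⟨0, by omega⟩ : Fin s) = ⟨s-2, by omega⟩ from Fin.ext (show 0 = s-2 by omega)]
        rw [show s - 1 = 1 from by omega] at h
        field_simp at h ⊢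
        linarith
      · obtain ⟨t, ht⟩ := hev
        have hψ2 : ψ ⟨2, by omega⟩ = 0 := key (t - 2) 2 (by omega) (by omega)
        have h := rmid 0 (by omega)
        rw [if_pos rfl, show (⟨0+2, by omega⟩ : Fin s) = ⟨2, by omega⟩ from Fin.ext rfl,
          hψ2, mul_zero, sub_zero] at h
        field_simp at h ⊢
        linarith
    refine ⟨hψ0, ?_⟩
    have h := r0
    rw [hψ0] at h
    have h3 : ψ ⟨1, by omega⟩ = xi 0 * (xi 1)⁻¹ * (xi 1)⁻¹ := by
      field_simp at h ⊢
      linarith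
    rw [h3]; ring
  · intro hodd
    obtain ⟨t, ht⟩ := hodd
    have hψ1 : ψ ⟨1, by omega⟩ = 0 := by
      by_cases h3 : s = 3
      · have h := rlast
        rw [if_neg (show s - 1 ≠ 1 by omega)] at h
        rcases mul_eq_zero.mp h with h' | h'
        · exact absurd h' (xi_pos (s-1)).ne'
        · rw [show (⟨1, by omega⟩ : Fin s) = ⟨s-2, by omega⟩ from Fin.ext (show 1 = s-2 by omega)]
          exact h'
      · exact key (t - 1) 1 (by omega) (by omega)
    refine ⟨?_, hψ1⟩
    have h := r0
    rw [hψ1, mul_zero, sub_zero] at h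
    rcases mul_eq_zero.mp h with h' | h'
    · exact absurd h' (xi_pos 0).ne'
    · exact h'
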